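/- arXiv:1502.07830 — 7 statements merged into one kernel-verified Lean document; each statement's English description precedes it below -/
import Mathlib

section
/- Let (Ω, μ) be a probability space, let X : Ω → S and Y : Ω → T be random variables with finite range into measurable spaces with measurable singletons, let g : S × T → U be measurable, and set T_enc := g ∘ ⟨X, Y⟩. Suppose there is a measurable decoder D : S × U → T with D(X(ω), T_enc(ω)) = Y(ω) for μ-almost every ω (zero-error decoding). Then H[T_enc] ≥ H[Y | X], i.e., the entropy of the transmission is at least the conditional entropy of the post-edit sequence given the pre-edit sequence. -/
open MeasureTheory ProbabilityTheory

/-- Shannon entropy of a random variable `X` on `(Ω, μ)` (finite-range convention: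
only finitely many atoms of the pushforward measure are nonzero). -/
noncomputable def entropy {Ω S : Type*} [MeasurableSpace Ω] [MeasurableSpace S]
    (μ : Measure Ω) (X : Ω → S) : ℝ :=
  ∑' s : S, Real.negMulLog ((μ.map X) {s}).toReal

/-- Conditional entropy `H[Y | X]` of `Y` given `X` on `(Ω, μ)`. -/
noncomputable def condEntropy {Ω S T : Type*} [MeasurableSpace Ω] [MeasurableSpace S]
    [MeasurableSpace T] (μ : Measure Ω) (Y : Ω → T) (X : Ω → S) : ℝ :=
  ∑' s : S, ((μ.map X) {s}).toReal * entropy (μ[|X ⁻¹' {s}]) Y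


lemma negMulLog_add_le {a b : ℝ} (ha : 0 ≤ a) (hb : 0 ≤ b) :
    Real.negMulLog (a + b) ≤ Real.negMulLog a + Real.negMulLog b := by
  rcases ha.eq_or_lt with rfl | ha'
  · simp
  rcases hb.eq_or_lt with rfl | hb'
  · simp
  have h1 : Real.log a ≤ Real.log (a + b) := Real.log_le_log ha' (by linarith)
  have h2 : Real.log b ≤ Real.log (a + b) := Real.log_le_log hb' (by linarith)
  simp only [Real.negMulLog, neg_mul]
  nlinarith

lemma negMulLog_sum_le {ι : Type*} (s : Finset ι) (f : ι → ℝ) (hf : ∀ i ∈ s, 0 ≤ f i) :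
    Real.negMulLog (∑ i ∈ s, f i) ≤ ∑ i ∈ s, Real.negMulLog (f i) := by
  induction s using Finset.cons_induction with
  | empty => simp
  | cons i s hi ih =>
    rw [Finset.sum_cons, Finset.sum_cons]
    calc Real.negMulLog (f i + ∑ j ∈ s, f j)
        ≤ Real.negMulLog (f i) + Real.negMulLog (∑ j ∈ s, f j) :=
          negMulLog_add_le (hf i (Finset.mem_cons_self i s))
            (Finset.sum_nonneg fun j hj => hf j (Finset.mem_cons_of_mem hj))
      _ ≤ _ := by
          gcongr
          exact ih fun j hj => hf j (Finset.mem_cons_of_mem hj)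

lemma entropy_eq_sum {Ω U : Type*} [MeasurableSpace Ω] [MeasurableSpace U]
    [MeasurableSingletonClass U] (ν : Measure Ω) (T : Ω → U) (hT : Measurable T)
    (C : Finset U) (hC : ∀ ω, T ω ∈ C) :
    entropy ν T = ∑ u ∈ C, Real.negMulLog ((ν (T ⁻¹' {u})).toReal) := by
  unfold entropy
  rw [tsum_eq_sum (s := C) ?_]
  · exact Finset.sum_congr rfl fun u _ => by
      rw [Measure.map_apply hT (measurableSet_singleton _)]
  · intro u hu
    rw [Measure.map_apply hT (measurableSet_singleton _)]
    have : T ⁻¹' {u} = ∅ := by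
      ext ω; simp only [Set.mem_preimage, Set.mem_singleton_iff, Set.mem_empty_iff_false,
        iff_false]
      exact fun h => hu (h ▸ hC ω)
    simp [this]

lemma entropy_comp_le {Ω U V : Type*} [MeasurableSpace Ω] [MeasurableSpace U]
    [MeasurableSpace V] [MeasurableSingletonClass U] [MeasurableSingletonClass V]
    (ν : Measure Ω) (T : Ω → U) (hT : Measurable T)
    (C : Finset U) (hC : ∀ ω, T ω ∈ C) (f : U → V) (hf : Measurable f)
    [IsFiniteMeasure ν] :
    entropy ν (f ∘ T) ≤ entropy ν T := by
  classical
  rw [entropy_eq_sum ν T hT C hC, entropy_eq_sum ν (f ∘ T) (hf.comp hT) (C.image f)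
    (fun ω => Finset.mem_image_of_mem f (hC ω))]
  have key : ∀ t ∈ C.image f,
      (ν ((f ∘ T) ⁻¹' {t})).toReal = ∑ u ∈ C.filter (f · = t), (ν (T ⁻¹' {u})).toReal := by
    intro t _
    have hset : (f ∘ T) ⁻¹' {t} = ⋃ u ∈ C.filter (f · = t), T ⁻¹' {u} := by
      ext ω
      simp only [Set.mem_preimage, Function.comp_apply, Set.mem_singleton_iff, Set.mem_iUnion,
        Finset.mem_filter, Finset.mem_coe]
      constructor
      · intro h; exact ⟨T ω, ⟨hC ω, h⟩, rfl⟩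
      · rintro ⟨u, ⟨_, hu⟩, rfl⟩; exact hu
    have hdisj : (↑(C.filter (f · = t)) : Set U).PairwiseDisjoint (fun u => T ⁻¹' {u}) := by
      intro a _ b _ hab
      exact Set.disjoint_left.mpr fun ω ha hb => hab (by
        simp only [Set.mem_preimage, Set.mem_singleton_iff] at ha hb
        rw [← ha, ← hb])
    rw [hset, measure_biUnion_finset hdisj
      (fun u _ => hT (measurableSet_singleton u)), ENNReal.toReal_sum]
    intro u _
    exact (measure_lt_top ν _).ne
  calc ∑ t ∈ C.image f, Real.negMulLog ((ν ((f ∘ T) ⁻¹' {t})).toReal)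
      ≤ ∑ t ∈ C.image f, ∑ u ∈ C.filter (f · = t), Real.negMulLog ((ν (T ⁻¹' {u})).toReal) := by
        refine Finset.sum_le_sum fun t ht => ?_
        rw [key t ht]
        exact negMulLog_sum_le _ _ fun u _ => ENNReal.toReal_nonneg
    _ = ∑ u ∈ C, Real.negMulLog ((ν (T ⁻¹' {u})).toReal) :=
        Finset.sum_fiberwise_of_maps_to (fun u hu => Finset.mem_image_of_mem f hu) _

/-- Zero-error converse: if a measurable decoder `D` recovers `Y` from the side
information `X` and the transmission `T_enc = g ∘ ⟨X, Y⟩` almost surely, then the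
entropy of the transmission is at least `H[Y | X]`. -/
theorem entropy_transmission_ge_condEntropy
    {Ω S T U : Type*} [MeasurableSpace Ω] [MeasurableSpace S] [MeasurableSpace T]
    [MeasurableSpace U] [MeasurableSingletonClass S] [MeasurableSingletonClass T]
    [MeasurableSingletonClass U]
    (μ : Measure Ω) [IsProbabilityMeasure μ]
    (X : Ω → S) (Y : Ω → T) (hX : Measurable X) (hY : Measurable Y)
    (hXfin : (Set.range X).Finite) (hYfin : (Set.range Y).Finite)
    (g : S × T → U) (hg : Measurable g)
    (D : S × U → T) (hD : Measurable D)
    (hdec : ∀ᵐ ω ∂μ, D (X ω, g (X ω, Y ω)) = Y ω) :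
    entropy μ (fun ω => g (X ω, Y ω)) ≥ condEntropy μ Y X := by
  classical
  set T' : Ω → U := fun ω => g (X ω, Y ω) with hT'def
  have hT' : Measurable T' := hg.comp (hX.prodMk hY)
  have hTfin : (Set.range T').Finite := by
    apply Set.Finite.subset ((hXfin.prod hYfin).image g)
    rintro _ ⟨ω, rfl⟩
    exact ⟨(X ω, Y ω), ⟨⟨ω, rfl⟩, ⟨ω, rfl⟩⟩, rfl⟩
  set A : Finset S := hXfin.toFinset with hAdef
  set C : Finset U := hTfin.toFinset with hCdef
  have hXA : ∀ ω, X ω ∈ A := fun ω => hXfin.mem_toFinset.mpr ⟨ω, rfl⟩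
  have hTC : ∀ ω, T' ω ∈ C := fun ω => hTfin.mem_toFinset.mpr ⟨ω, rfl⟩
  have hE : ∀ s : S, MeasurableSet (X ⁻¹' {s}) := fun s => hX (measurableSet_singleton s)
  set p : S → ℝ := fun s => (μ (X ⁻¹' {s})).toReal with hpdef
  set j : S → U → ℝ := fun s u => (μ (X ⁻¹' {s} ∩ T' ⁻¹' {u})).toReal with hjdef
  set r : S → U → ℝ := fun s u => (((μ[|X ⁻¹' {s}]).map T') {u}).toReal with hrdef
  have hpnonneg : ∀ s, 0 ≤ p s := fun s => ENNReal.toReal_nonneg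
  have hrnonneg : ∀ s u, 0 ≤ r s u := fun s u => ENNReal.toReal_nonneg
  -- p s * r s u = j s u
  have hpr : ∀ s u, p s * r s u = j s u := by
    intro s u
    by_cases h0 : μ (X ⁻¹' {s}) = 0
    · have h1 : μ (X ⁻¹' {s} ∩ T' ⁻¹' {u}) = 0 :=
        measure_mono_null Set.inter_subset_left h0
      simp [hpdef, hjdef, hrdef, h0, h1]
    · have hps : p s ≠ 0 := by
        simp only [hpdef, ENNReal.toReal_ne_zero]
        exact ⟨h0, measure_ne_top μ _⟩
      have hr : r s u = (p s)⁻¹ * j s u := by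
        simp [hrdef, Measure.map_apply hT' (measurableSet_singleton u), cond_apply (hE s),
          ENNReal.toReal_mul, ENNReal.toReal_inv, hpdef, hjdef]
      rw [hr, ← mul_assoc, mul_inv_cancel₀ hps, one_mul]
  -- law of total probability
  have hq : ∀ u, (μ (T' ⁻¹' {u})).toReal = ∑ s ∈ A, j s u := by
    intro u
    have hset : T' ⁻¹' {u} = ⋃ s ∈ A, (X ⁻¹' {s} ∩ T' ⁻¹' {u}) := by
      ext ω
      simp only [Set.mem_preimage, Set.mem_singleton_iff, Set.mem_iUnion, Set.mem_inter_iff,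
        Finset.mem_coe]
      constructor
      · intro h; exact ⟨X ω, hXA ω, rfl, h⟩
      · rintro ⟨s, _, _, h⟩; exact h
    have hdisj : (↑A : Set S).PairwiseDisjoint (fun s => X ⁻¹' {s} ∩ T' ⁻¹' {u}) := by
      intro a _ b _ hab
      refine Set.disjoint_left.mpr fun ω ha hb => hab ?_
      have h1 := ha.1; have h2 := hb.1
      simp only [Set.mem_preimage, Set.mem_singleton_iff] at h1 h2
      rw [← h1, ← h2]
    rw [hset, measure_biUnion_finset hdisj
      (fun s _ => (hE s).inter (hT' (measurableSet_singleton u))),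
      ENNReal.toReal_sum (fun s _ => (measure_lt_top μ _).ne)]
  -- total mass one
  have hp1 : ∑ s ∈ A, p s = 1 := by
    have hset : (Set.univ : Set Ω) = ⋃ s ∈ A, X ⁻¹' {s} := by
      ext ω
      simp only [Set.mem_univ, Set.mem_iUnion, Set.mem_preimage, Set.mem_singleton_iff,
        Finset.mem_coe, true_iff]
      exact ⟨X ω, hXA ω, rfl⟩
    have hdisj : (↑A : Set S).PairwiseDisjoint (fun s => X ⁻¹' {s}) := by
      intro a _ b _ hab
      refine Set.disjoint_left.mpr fun ω ha hb => hab ?_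
      simp only [Set.mem_preimage, Set.mem_singleton_iff] at ha hb
      rw [← ha, ← hb]
    have h1 : (1 : ENNReal) = ∑ s ∈ A, μ (X ⁻¹' {s}) := by
      rw [← measure_univ (μ := μ), hset,
        measure_biUnion_finset hdisj (fun s _ => hE s)]
    have := congrArg ENNReal.toReal h1
    rw [ENNReal.toReal_sum (fun s _ => (measure_lt_top μ _).ne)] at this
    simpa [hpdef] using this.symm
  -- condEntropy as finite sum
  have hce : condEntropy μ Y X = ∑ s ∈ A, p s * entropy (μ[|X ⁻¹' {s}]) Y := by
    unfold condEntropy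
    rw [tsum_eq_sum (s := A) ?_]
    · exact Finset.sum_congr rfl fun s _ => by
        rw [Measure.map_apply hX (measurableSet_singleton _)]
    · intro s hs
      have hempty : X ⁻¹' {s} = ∅ := by
        ext ω
        simp only [Set.mem_preimage, Set.mem_singleton_iff, Set.mem_empty_iff_false, iff_false]
        exact fun h => hs (h ▸ hXA ω)
      rw [Measure.map_apply hX (measurableSet_singleton _), hempty]
      simp
  -- conditional entropy of T' as finite sum
  have hT_ent : ∀ s : S, entropy (μ[|X ⁻¹' {s}]) T' = ∑ u ∈ C, Real.negMulLog (r s u) := by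
    intro s
    rw [entropy_eq_sum _ T' hT' C hTC]
    refine Finset.sum_congr rfl fun u _ => ?_
    simp only [hrdef]
    rw [Measure.map_apply hT' (measurableSet_singleton u)]
  -- Step B : decoding gives H(Y | X = s) ≤ H(T' | X = s)
  have stepB : ∀ s ∈ A,
      p s * entropy (μ[|X ⁻¹' {s}]) Y ≤ p s * entropy (μ[|X ⁻¹' {s}]) T' := by
    intro s _
    by_cases h0 : μ (X ⁻¹' {s}) = 0
    · simp [hpdef, h0]
    · have hprob : IsProbabilityMeasure (μ[|X ⁻¹' {s}]) := cond_isProbabilityMeasure h0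
      refine mul_le_mul_of_nonneg_left ?_ (hpnonneg s)
      set ν := μ[|X ⁻¹' {s}] with hνdef
      have hae1 : ∀ᵐ ω ∂ν, X ω = s := by
        have hν0 : ν ((X ⁻¹' {s})ᶜ) = 0 := by
          rw [hνdef, cond_apply (hE s)]
          simp
        filter_upwards [MeasureTheory.mem_ae_iff.mpr hν0] with ω hω
        simpa using hω
      have hae2 : ∀ᵐ ω ∂ν, D (X ω, T' ω) = Y ω :=
        hdec.filter_mono cond_absolutelyContinuous.ae_le
      have heq : (fun ω => D (s, T' ω)) =ᵐ[ν] Y := by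
        filter_upwards [hae1, hae2] with ω h1 h2
        rw [← h1]; exact h2
      have hYmap : entropy ν Y = entropy ν (fun ω => D (s, T' ω)) := by
        unfold entropy
        rw [Measure.map_congr heq]
      rw [hYmap]
      exact entropy_comp_le ν T' hT' C hTC (fun u => D (s, u))
        (hD.comp (measurable_const.prodMk measurable_id))
  -- Step A : conditioning reduces entropy (Jensen)
  have stepA : ∑ s ∈ A, p s * entropy (μ[|X ⁻¹' {s}]) T' ≤ entropy μ T' := by
    rw [entropy_eq_sum μ T' hT' C hTC]
    calc ∑ s ∈ A, p s * entropy (μ[|X ⁻¹' {s}]) T'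
        = ∑ s ∈ A, ∑ u ∈ C, p s * Real.negMulLog (r s u) := by
          simp_rw [hT_ent, Finset.mul_sum]
      _ = ∑ u ∈ C, ∑ s ∈ A, p s * Real.negMulLog (r s u) := Finset.sum_comm
      _ ≤ ∑ u ∈ C, Real.negMulLog ((μ (T' ⁻¹' {u})).toReal) := by
          refine Finset.sum_le_sum fun u _ => ?_
          have jensen := Real.concaveOn_negMulLog.le_map_sum (t := A) (w := p)
            (p := fun s => r s u) (fun s _ => hpnonneg s) hp1
            (fun s _ => Set.mem_Ici.mpr (hrnonneg s u))
          simp only [smul_eq_mul] at jensen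
          calc ∑ s ∈ A, p s * Real.negMulLog (r s u)
              ≤ Real.negMulLog (∑ s ∈ A, p s * r s u) := jensen
            _ = Real.negMulLog ((μ (T' ⁻¹' {u})).toReal) := by
                rw [hq u]
                congr 1
                exact Finset.sum_congr rfl fun s _ => hpr s u
  calc condEntropy μ Y X = ∑ s ∈ A, p s * entropy (μ[|X ⁻¹' {s}]) Y := hce
    _ ≤ ∑ s ∈ A, p s * entropy (μ[|X ⁻¹' {s}]) T' := Finset.sum_le_sum stepB
    _ ≤ entropy μ T' := stepA
end

section
/- Let (Ω, μ) be a probability space, let X : Ω → S and E : Ω → T be independent random variables with finite range into measurable spaces with measurable singletons, let f : S × T → U be measurable, and set Y := f ∘ ⟨X, E⟩. Then H[Y | X] = H[E] − H[E | ⟨X, Y⟩]; that is, the conditional entropy of the post-edit sequence given the pre-edit sequence equals the entropy of the edit pattern minus 'nature's secret' H(E | X, Y). -/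
open MeasureTheory ProbabilityTheory

lemma grouping_negMulLog {T U : Type*} [DecidableEq U] (TF : Finset T) (a : T → ℝ)
    (ha : ∀ t ∈ TF, 0 ≤ a t) (g : T → U) :
    ∑ t ∈ TF, Real.negMulLog (a t)
      = ∑ u ∈ TF.image g, Real.negMulLog (∑ t ∈ TF.filter (fun t => g t = u), a t)
        + ∑ u ∈ TF.image g, (∑ t ∈ TF.filter (fun t => g t = u), a t) *
            ∑ t ∈ TF.filter (fun t => g t = u),
              Real.negMulLog (a t / (∑ t' ∈ TF.filter (fun t' => g t' = u), a t')) := by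
  have hpart : ∑ t ∈ TF, Real.negMulLog (a t)
      = ∑ u ∈ TF.image g, ∑ t ∈ TF.filter (fun t => g t = u), Real.negMulLog (a t) := by
    rw [Finset.sum_fiberwise_eq_sum_filter TF (TF.image g) g (fun t => Real.negMulLog (a t))]
    congr 1
    exact (Finset.filter_true_of_mem (fun t ht => Finset.mem_image_of_mem g ht)).symm
  rw [hpart, ← Finset.sum_add_distrib]
  apply Finset.sum_congr rfl
  intro u hu
  set ρ := ∑ t ∈ TF.filter (fun t => g t = u), a t with hρ
  by_cases h0 : ρ = 0
  · have hz : ∀ t ∈ TF.filter (fun t => g t = u), a t = 0 := by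
      intro t ht
      have := (Finset.sum_eq_zero_iff_of_nonneg (fun t ht => ha t (Finset.mem_filter.1 ht).1)).1 h0
      exact this t ht
    rw [h0]
    simp only [Real.negMulLog_zero, zero_mul, add_zero]
    rw [Finset.sum_congr rfl (fun t ht => by rw [hz t ht, Real.negMulLog_zero])]
    simp
  · have hsum1 : ∑ t ∈ TF.filter (fun t => g t = u), a t / ρ = 1 := by
      rw [← Finset.sum_div, div_self h0]
    calc ∑ t ∈ TF.filter (fun t => g t = u), Real.negMulLog (a t)
        = ∑ t ∈ TF.filter (fun t => g t = u),
            ((a t / ρ) * Real.negMulLog ρ + ρ * Real.negMulLog (a t / ρ)) := by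
          apply Finset.sum_congr rfl
          intro t ht
          rw [← Real.negMulLog_mul, mul_div_cancel₀ _ h0]
      _ = (∑ t ∈ TF.filter (fun t => g t = u), a t / ρ) * Real.negMulLog ρ
            + ρ * ∑ t ∈ TF.filter (fun t => g t = u), Real.negMulLog (a t / ρ) := by
          rw [Finset.sum_add_distrib, Finset.sum_mul, Finset.mul_sum]
      _ = Real.negMulLog ρ + ρ * ∑ t ∈ TF.filter (fun t => g t = u), Real.negMulLog (a t / ρ) := by
          rw [hsum1, one_mul]

/-- Decompose the measure of a preimage of a set under a finite-range map as a
finite sum over fibers. -/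
lemma measure_preimage_eq_sum_fibers {Ω T : Type*} [MeasurableSpace Ω] [MeasurableSpace T]
    [MeasurableSingletonClass T] (μ : Measure Ω) (E : Ω → T) (hE : Measurable E)
    (TF : Finset T) (hTF : Set.range E ⊆ ↑TF) (p : T → Prop) [DecidablePred p] :
    μ (E ⁻¹' {t | p t}) = ∑ t ∈ TF.filter p, μ (E ⁻¹' {t}) := by
  have hset : E ⁻¹' {t | p t} = ⋃ t ∈ TF.filter p, E ⁻¹' {t} := by
    ext ω
    simp only [Set.mem_preimage, Set.mem_setOf_eq, Set.mem_iUnion, Finset.mem_filter,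
      Set.mem_singleton_iff, exists_prop]
    constructor
    · intro h
      exact ⟨E ω, ⟨hTF ⟨ω, rfl⟩, h⟩, rfl⟩
    · rintro ⟨t, ⟨_, hpt⟩, rfl⟩
      exact hpt
  rw [hset, measure_biUnion_finset]
  · intro t₁ h₁ t₂ h₂ hne
    apply Set.disjoint_left.2
    intro ω hω₁ hω₂
    exact hne (hω₁.symm.trans hω₂)
  · exact fun t _ => hE (measurableSet_singleton t)

/-- Lemma 2: for an edit process `E` independent of the source `X`, with post-edit
sequence `Y = f ∘ ⟨X, E⟩` a deterministic function of `(X, E)`, the conditional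
entropy of `Y` given `X` equals `H[E]` minus "nature's secret" `H[E | ⟨X, Y⟩]`. -/
theorem condEntropy_eq_entropy_sub_natures_secret
    {Ω S T U : Type*} [MeasurableSpace Ω] [MeasurableSpace S] [MeasurableSpace T]
    [MeasurableSpace U] [MeasurableSingletonClass S] [MeasurableSingletonClass T]
    [MeasurableSingletonClass U]
    (μ : Measure Ω) [IsProbabilityMeasure μ]
    (X : Ω → S) (E : Ω → T) (hX : Measurable X) (hE : Measurable E)
    (hXfin : (Set.range X).Finite) (hEfin : (Set.range E).Finite)
    (hindep : IndepFun X E μ)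
    (f : S × T → U) (hf : Measurable f) :
    condEntropy μ (fun ω => f (X ω, E ω)) X =
      entropy μ E - condEntropy μ E (fun ω => (X ω, f (X ω, E ω))) := by
  classical
  have hY : Measurable (fun ω => f (X ω, E ω)) := hf.comp (hX.prodMk hE)
  set Y : Ω → U := fun ω => f (X ω, E ω) with hYdef
  set Z : Ω → S × U := fun ω => (X ω, f (X ω, E ω)) with hZdef
  have hZ : Measurable Z := hX.prodMk hY
  set SF : Finset S := hXfin.toFinset with hSF
  set TF : Finset T := hEfin.toFinset with hTFdef
  have hXr : Set.range X ⊆ ↑SF := by simp [hSF]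
  have hEr : Set.range E ⊆ ↑TF := by simp [hTFdef]
  set a : T → ℝ := fun t => (μ (E ⁻¹' {t})).toReal with hadef
  set p : S → ℝ := fun s => (μ (X ⁻¹' {s})).toReal with hpdef
  have hane : ∀ t, μ (E ⁻¹' {t}) ≠ ⊤ := fun t => measure_ne_top μ _
  have hpne : ∀ s, μ (X ⁻¹' {s}) ≠ ⊤ := fun s => measure_ne_top μ _
  have hBmeas : ∀ (s : S) (u : U), MeasurableSet {t : T | f (s, t) = u} :=
    fun s u => (hf.comp measurable_prodMk_left) (measurableSet_singleton u)
  set R : S → U → ENNReal := fun s u => μ (E ⁻¹' {t | f (s, t) = u}) with hRdef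
  have hRsum : ∀ s u, R s u = ∑ t ∈ TF.filter (fun t => f (s, t) = u), μ (E ⁻¹' {t}) :=
    fun s u => measure_preimage_eq_sum_fibers μ E hE TF hEr _
  have hRne : ∀ s u, R s u ≠ ⊤ := fun s u => measure_ne_top μ _
  set ρ : S → U → ℝ := fun s u => ∑ t ∈ TF.filter (fun t => f (s, t) = u), a t with hρdef
  have hρR : ∀ s u, (R s u).toReal = ρ s u := by
    intro s u
    rw [hRsum]
    exact ENNReal.toReal_sum (fun t _ => hane t)
  have hEempty : ∀ t ∉ TF, μ (E ⁻¹' {t}) = 0 := by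
    intro t ht
    have : E ⁻¹' {t} = ∅ := by
      ext ω
      simp only [Set.mem_preimage, Set.mem_singleton_iff, Set.mem_empty_iff_false, iff_false]
      intro h
      exact ht (hEr ⟨ω, h⟩)
    rw [this]; exact measure_empty
  have hXempty : ∀ s ∉ SF, μ (X ⁻¹' {s}) = 0 := by
    intro s hs
    have : X ⁻¹' {s} = ∅ := by
      ext ω
      simp only [Set.mem_preimage, Set.mem_singleton_iff, Set.mem_empty_iff_false, iff_false]
      intro h
      exact hs (hXr ⟨ω, h⟩)
    rw [this]; exact measure_empty
  have hXYmeas : ∀ s u, μ (X ⁻¹' {s} ∩ Y ⁻¹' {u}) = μ (X ⁻¹' {s}) * R s u := by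
    intro s u
    have hset : X ⁻¹' {s} ∩ Y ⁻¹' {u} = X ⁻¹' {s} ∩ E ⁻¹' {t | f (s, t) = u} := by
      ext ω
      simp only [Set.mem_inter_iff, Set.mem_preimage, Set.mem_singleton_iff,
        Set.mem_setOf_eq, hYdef]
      constructor
      · rintro ⟨h1, h2⟩; exact ⟨h1, by rwa [h1] at h2⟩
      · rintro ⟨h1, h2⟩; exact ⟨h1, by rwa [h1]⟩
    rw [hset]
    exact hindep.measure_inter_preimage_eq_mul {s} _ (measurableSet_singleton s) (hBmeas s u)
  have hXEmeas : ∀ s t, μ (X ⁻¹' {s} ∩ E ⁻¹' {t}) = μ (X ⁻¹' {s}) * μ (E ⁻¹' {t}) :=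
    fun s t => hindep.measure_inter_preimage_eq_mul {s} {t} (measurableSet_singleton s)
      (measurableSet_singleton t)
  have hR0 : ∀ s u, u ∉ TF.image (fun t => f (s, t)) → R s u = 0 := by
    intro s u hu
    have hfil : TF.filter (fun t => f (s, t) = u) = ∅ := by
      apply Finset.filter_eq_empty_iff.2
      intro t ht h
      exact hu (Finset.mem_image.2 ⟨t, ht, h⟩)
    rw [hRsum, hfil, Finset.sum_empty]
  -- (I): entropy of E
  have hI : entropy μ E = ∑ t ∈ TF, Real.negMulLog (a t) := by
    unfold entropy
    have hsupp : ∀ t ∉ TF, Real.negMulLog ((μ.map E) {t}).toReal = 0 := by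
      intro t ht
      rw [Measure.map_apply hE (measurableSet_singleton t), hEempty t ht]
      simp
    rw [tsum_eq_sum hsupp]
    apply Finset.sum_congr rfl
    intro t _
    rw [Measure.map_apply hE (measurableSet_singleton t)]
  -- (II): conditional entropy of Y given X
  have hcondY : ∀ s : S, μ (X ⁻¹' {s}) ≠ 0 →
      entropy (μ[|X ⁻¹' {s}]) Y
        = ∑ u ∈ TF.image (fun t => f (s, t)), Real.negMulLog (ρ s u) := by
    intro s hs
    have hmap : ∀ u, ((μ[|X ⁻¹' {s}]).map Y) {u} = R s u := by
      intro u
      rw [Measure.map_apply hY (measurableSet_singleton u),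
        cond_apply (hX (measurableSet_singleton s)) μ, hXYmeas s u, ← mul_assoc,
        ENNReal.inv_mul_cancel hs (hpne s), one_mul]
    unfold entropy
    have hsupp : ∀ u ∉ TF.image (fun t => f (s, t)),
        Real.negMulLog (((μ[|X ⁻¹' {s}]).map Y) {u}).toReal = 0 := by
      intro u hu
      rw [hmap u, hR0 s u hu]
      simp
    rw [tsum_eq_sum hsupp]
    exact Finset.sum_congr rfl (fun u _ => by rw [hmap u, hρR])
  have hII : condEntropy μ Y X
      = ∑ s ∈ SF, p s * ∑ u ∈ TF.image (fun t => f (s, t)), Real.negMulLog (ρ s u) := by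
    unfold condEntropy
    have hsupp : ∀ s ∉ SF, ((μ.map X) {s}).toReal * entropy (μ[|X ⁻¹' {s}]) Y = 0 := by
      intro s hs
      rw [Measure.map_apply hX (measurableSet_singleton s), hXempty s hs]
      simp
    rw [tsum_eq_sum hsupp]
    apply Finset.sum_congr rfl
    intro s _
    rw [Measure.map_apply hX (measurableSet_singleton s)]
    by_cases hs : μ (X ⁻¹' {s}) = 0
    · simp [hpdef, hs]
    · rw [hcondY s hs]
  -- (III): conditional entropy of E given Z
  have hZpre : ∀ s u, Z ⁻¹' {(s, u)} = X ⁻¹' {s} ∩ Y ⁻¹' {u} := by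
    intro s u
    ext ω
    simp only [Set.mem_preimage, Set.mem_singleton_iff, Set.mem_inter_iff, hZdef, hYdef,
      Prod.mk.injEq]
  have hZEmeas : ∀ s u t, μ (Z ⁻¹' {(s, u)} ∩ E ⁻¹' {t})
      = if f (s, t) = u then μ (X ⁻¹' {s}) * μ (E ⁻¹' {t}) else 0 := by
    intro s u t
    by_cases h : f (s, t) = u
    · rw [if_pos h, ← hXEmeas s t]
      congr 1
      rw [hZpre]
      ext ω
      simp only [Set.mem_inter_iff, Set.mem_preimage, Set.mem_singleton_iff, hYdef]
      constructor
      · rintro ⟨⟨h1, _⟩, h3⟩; exact ⟨h1, h3⟩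
      · rintro ⟨h1, h3⟩
        refine ⟨⟨h1, ?_⟩, h3⟩
        rw [h1, h3]; exact h
    · rw [if_neg h]
      have : Z ⁻¹' {(s, u)} ∩ E ⁻¹' {t} = ∅ := by
        rw [hZpre]
        ext ω
        simp only [Set.mem_inter_iff, Set.mem_preimage, Set.mem_singleton_iff,
          Set.mem_empty_iff_false, iff_false, not_and, hYdef]
        intro h1 h2
        exact h (by rw [← h1.1, ← h2]; exact h1.2)
      rw [this]; exact measure_empty
  have hcondE : ∀ s u, μ (X ⁻¹' {s}) ≠ 0 → R s u ≠ 0 →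
      entropy (μ[|Z ⁻¹' {(s, u)}]) E
        = ∑ t ∈ TF.filter (fun t => f (s, t) = u), Real.negMulLog (a t / ρ s u) := by
    intro s u hs hRu
    have hZm : MeasurableSet (Z ⁻¹' {(s, u)}) := hZ (measurableSet_singleton _)
    have hmZ : μ (Z ⁻¹' {(s, u)}) = μ (X ⁻¹' {s}) * R s u := by
      rw [hZpre]; exact hXYmeas s u
    have hmap : ∀ t, ((μ[|Z ⁻¹' {(s, u)}]).map E) {t}
        = (μ (Z ⁻¹' {(s, u)}))⁻¹ * μ (Z ⁻¹' {(s, u)} ∩ E ⁻¹' {t}) := by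
      intro t
      rw [Measure.map_apply hE (measurableSet_singleton t), cond_apply hZm μ]
    unfold entropy
    have hsupp : ∀ t ∉ TF.filter (fun t => f (s, t) = u),
        Real.negMulLog (((μ[|Z ⁻¹' {(s, u)}]).map E) {t}).toReal = 0 := by
      intro t ht
      by_cases hft : f (s, t) = u
      · have htTF : t ∉ TF := fun hmem => ht (Finset.mem_filter.2 ⟨hmem, hft⟩)
        rw [hmap t, hZEmeas s u t, if_pos hft, hEempty t htTF, mul_zero, mul_zero]
        simp
      · rw [hmap t, hZEmeas s u t, if_neg hft, mul_zero]
        simp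
    rw [tsum_eq_sum hsupp]
    apply Finset.sum_congr rfl
    intro t ht
    have hft := (Finset.mem_filter.1 ht).2
    rw [hmap t, hZEmeas s u t, if_pos hft, hmZ]
    congr 1
    rw [ENNReal.toReal_mul, ENNReal.toReal_inv, ENNReal.toReal_mul, ENNReal.toReal_mul, hρR]
    have hps : (μ (X ⁻¹' {s})).toReal ≠ 0 := ENNReal.toReal_ne_zero.2 ⟨hs, hpne s⟩
    have hρs : ρ s u ≠ 0 := by
      rw [← hρR]
      exact ENNReal.toReal_ne_zero.2 ⟨hRu, hRne s u⟩
    field_simp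
    ring
  have hIII : condEntropy μ E Z
      = ∑ s ∈ SF, ∑ u ∈ TF.image (fun t => f (s, t)),
          (p s * ρ s u) * ∑ t ∈ TF.filter (fun t => f (s, t) = u),
            Real.negMulLog (a t / ρ s u) := by
    unfold condEntropy
    set UF : Finset U := (SF ×ˢ TF).image f with hUF
    have hZr : Set.range Z ⊆ ↑(SF ×ˢ UF) := by
      rintro q ⟨ω, rfl⟩
      rw [Finset.coe_product]
      refine ⟨hXr ⟨ω, rfl⟩, ?_⟩
      apply Finset.mem_coe.2
      exact Finset.mem_image.2 ⟨(X ω, E ω),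
        Finset.mem_product.2 ⟨hXr ⟨ω, rfl⟩, hEr ⟨ω, rfl⟩⟩, rfl⟩
    have hsupp : ∀ q ∉ SF ×ˢ UF,
        ((μ.map Z) {q}).toReal * entropy (μ[|Z ⁻¹' {q}]) E = 0 := by
      intro q hq
      have hempty : Z ⁻¹' {q} = ∅ := by
        ext ω
        simp only [Set.mem_preimage, Set.mem_singleton_iff, Set.mem_empty_iff_false, iff_false]
        intro h
        exact hq (by rw [← h]; exact hZr ⟨ω, rfl⟩)
      rw [Measure.map_apply hZ (measurableSet_singleton q), hempty]
      simp
    rw [tsum_eq_sum hsupp, Finset.sum_product]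
    apply Finset.sum_congr rfl
    intro s hsSF
    have hsub : TF.image (fun t => f (s, t)) ⊆ UF := by
      intro u hu
      obtain ⟨t, htTF, rfl⟩ := Finset.mem_image.1 hu
      exact Finset.mem_image.2 ⟨(s, t), Finset.mem_product.2 ⟨hsSF, htTF⟩, rfl⟩
    have hmapZ : ∀ u, (μ.map Z) {(s, u)} = μ (X ⁻¹' {s}) * R s u := by
      intro u
      rw [Measure.map_apply hZ (measurableSet_singleton _), hZpre, hXYmeas s u]
    have hzero : ∀ u ∈ UF, u ∉ TF.image (fun t => f (s, t)) →
        ((μ.map Z) {(s, u)}).toReal * entropy (μ[|Z ⁻¹' {(s, u)}]) E = 0 := by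
      intro u _ hu
      rw [hmapZ u, hR0 s u hu, mul_zero]
      simp
    rw [← Finset.sum_subset hsub hzero]
    apply Finset.sum_congr rfl
    intro u hu
    rw [hmapZ u]
    by_cases hs0 : μ (X ⁻¹' {s}) = 0
    · rw [hs0, zero_mul]
      simp [hpdef, hs0]
    by_cases hRu : R s u = 0
    · have hρ0 : ρ s u = 0 := by rw [← hρR, hRu]; simp
      rw [hRu, mul_zero, hρ0]
      simp
    rw [hcondE s u hs0 hRu, ENNReal.toReal_mul, hρR]
  -- (IV): total probability
  have hIV : ∑ s ∈ SF, p s = 1 := by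
    have h1 : μ (X ⁻¹' {s | (fun _ : S => True) s}) = ∑ s ∈ SF.filter (fun _ => True), μ (X ⁻¹' {s}) :=
      measure_preimage_eq_sum_fibers μ X hX SF hXr _
    rw [Finset.filter_true] at h1
    have h2 : X ⁻¹' {s | (fun _ : S => True) s} = Set.univ := by
      ext ω; simp
    rw [h2, measure_univ] at h1
    have h3 : (∑ s ∈ SF, μ (X ⁻¹' {s})).toReal = ∑ s ∈ SF, p s :=
      ENNReal.toReal_sum (fun s _ => hpne s)
    rw [← h3, ← h1]
    simp
  -- assembly
  rw [hII, hI, hIII]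
  have hgg : ∀ s : S,
      p s * ∑ u ∈ TF.image (fun t => f (s, t)), Real.negMulLog (ρ s u)
        + ∑ u ∈ TF.image (fun t => f (s, t)), (p s * ρ s u) *
            ∑ t ∈ TF.filter (fun t => f (s, t) = u), Real.negMulLog (a t / ρ s u)
      = p s * ∑ t ∈ TF, Real.negMulLog (a t) := by
    intro s
    have hg := grouping_negMulLog TF a (fun t _ => ENNReal.toReal_nonneg) (fun t => f (s, t))
    have h2 : ∑ u ∈ TF.image (fun t => f (s, t)), (p s * ρ s u) *
          ∑ t ∈ TF.filter (fun t => f (s, t) = u), Real.negMulLog (a t / ρ s u)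
        = p s * ∑ u ∈ TF.image (fun t => f (s, t)), ρ s u *
            ∑ t ∈ TF.filter (fun t => f (s, t) = u), Real.negMulLog (a t / ρ s u) := by
      rw [Finset.mul_sum]
      exact Finset.sum_congr rfl (fun u _ => by ring)
    rw [h2, ← mul_add]
    congr 1
    rw [hg]
  have hsum : ∑ s ∈ SF, (p s * ∑ u ∈ TF.image (fun t => f (s, t)), Real.negMulLog (ρ s u)
        + ∑ u ∈ TF.image (fun t => f (s, t)), (p s * ρ s u) *
            ∑ t ∈ TF.filter (fun t => f (s, t) = u), Real.negMulLog (a t / ρ s u))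
      = ∑ s ∈ SF, p s * ∑ t ∈ TF, Real.negMulLog (a t) :=
    Finset.sum_congr rfl (fun s _ => hgg s)
  rw [Finset.sum_add_distrib] at hsum
  have hH : ∑ s ∈ SF, p s * (∑ t ∈ TF, Real.negMulLog (a t))
      = ∑ t ∈ TF, Real.negMulLog (a t) := by
    rw [← Finset.sum_mul, hIV, one_mul]
  linarith [hsum, hH]
end

section
/- Let 𝒜 be a finite alphabet with |𝒜| = a ≥ 2 and let α ∈ 𝒜. For all n, k ∈ ℕ, the number of strings Y ∈ 𝒜^{n+k} (lists over 𝒜 of length n+k) that contain the constant string of n copies of α as a subsequence is at least C(n+k, k)·(a−1)^k, where C(·,·) denotes the binomial coefficient. Consequently, the post-edit set of the all-α string of length n under an arbitrary insertion-only process with at most k insertions has cardinality at least C(n+k, k)·(a−1)^k. -/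
/-- The post-edit set of a string `X` with deletion budget `d` and insertion
budget `i`: all strings `Y` sharing a common subsequence `Z` with `X` such that
`|X| − |Z| ≤ d` and `|Y| − |Z| ≤ i`. -/
def PostEditSet {α : Type*} (X : List α) (d i : ℕ) : Set (List α) :=
  {Y | ∃ Z : List α, Z.Sublist X ∧ Z.Sublist Y ∧
    X.length - Z.length ≤ d ∧ Y.length - Z.length ≤ i}

/-!
Choose the `k` positions of a word of length `n + k` that are *not* `α`, and a letter other
than `α` for each of them; the remaining `n` positions carry `α`, so the word contains `αⁿ`
as a subsequence. Distinct choices give distinct words, which yields `C(n+k, k)·(a−1)^k`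
such words, and each of them lies in the post-edit set of `αⁿ` (take `Z = αⁿ`).
-/

open Finset

section PostEditSet

variable {α : Type*}

theorem mem_postEditSet_of_sublist {X Y : List α} (d : ℕ) {i : ℕ} (hXY : X.Sublist Y)
    (hlen : Y.length ≤ X.length + i) : Y ∈ PostEditSet X d i :=
  ⟨X, List.Sublist.refl X, hXY, by simp, by omega⟩

theorem PostEditSet.finite [Finite α] (X : List α) (d i : ℕ) :
    (PostEditSet X d i).Finite := by
  refine (List.finite_length_le α (X.length + i)).subset ?_
  rintro Y ⟨Z, hZX, hZY, -, hYZ⟩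
  have := hZX.length_le
  have := hZY.length_le
  simp only [Set.mem_ofPred_eq]
  omega

end PostEditSet

section FillOutside

variable {ι β : Type*} [DecidableEq ι]

def fillOutside (b : β) (S : Finset ι) (f : S → {c // c ≠ b}) (i : ι) : β :=
  if h : i ∈ S then f ⟨i, h⟩ else b

theorem fillOutside_eq_self_iff {b : β} {S : Finset ι} {f : S → {c // c ≠ b}} {i : ι} :
    fillOutside b S f i = b ↔ i ∉ S := by
  by_cases h : i ∈ S
  · simpa [fillOutside, h] using (f ⟨i, h⟩).2
  · simp [fillOutside, h]

theorem fillOutside_injective (b : β) :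
    Function.Injective fun p : (S : Finset ι) × (S → {c // c ≠ b}) ↦ fillOutside b p.1 p.2 := by
  rintro ⟨S, f⟩ ⟨T, g⟩ h
  obtain rfl : S = T := by
    ext i
    have := congrArg (· = b) (congrFun h i)
    simpa only [fillOutside_eq_self_iff, eq_iff_iff, not_iff_not] using this
  congr
  funext ⟨i, hi⟩
  have := congrFun h i
  simp only [fillOutside, hi, dite_true] at this
  exact Subtype.ext this

theorem card_sigma_finsetLen_fun_ne [Fintype ι] [Fintype β] [DecidableEq β] (b : β) (k : ℕ) :
    Fintype.card ((S : {S : Finset ι // #S = k}) × (S.1 → {c // c ≠ b})) =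
      (Fintype.card ι).choose k * (Fintype.card β - 1) ^ k := by
  have hne : Fintype.card {c // c ≠ b} = Fintype.card β - 1 := by
    rw [Fintype.card_subtype_compl, Fintype.card_subtype_eq]
  simp_rw [Fintype.card_sigma, Fintype.card_fun, hne]
  rw [Finset.sum_congr rfl fun S _ ↦ by rw [Fintype.card_coe, S.2], sum_const, card_univ,
    Fintype.card_finset_len, smul_eq_mul]

end FillOutside

theorem List.count_ofFn {β : Type*} [DecidableEq β] {m : ℕ} (g : Fin m → β) (b : β) :
    (List.ofFn g).count b = #{i | g i = b} := by
  rw [← Multiset.coe_count, ← Fin.univ_val_map, Multiset.count_map]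
  simp [Finset.card, Finset.filter_val, eq_comm]

theorem replicate_sublist_ofFn_fillOutside {β : Type*} [DecidableEq β] {n k : ℕ} (b : β)
    {S : Finset (Fin (n + k))} (hS : #S = k) (f : S → {c // c ≠ b}) :
    (List.replicate n b).Sublist (List.ofFn (fillOutside b S f)) := by
  rw [List.replicate_sublist_iff, List.count_ofFn]
  simp only [fillOutside_eq_self_iff]
  rw [← compl_filter, card_compl, filter_mem_eq_inter, univ_inter, hS, Fintype.card_fin]
  omega

theorem card_superStrings_ge_general {𝒜 : Type*} [Fintype 𝒜] {a : ℕ}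
    (hcard : Fintype.card 𝒜 = a) (α : 𝒜) (n k : ℕ) :
    Nat.card {Y : List 𝒜 // Y.length = n + k ∧ (List.replicate n α).Sublist Y} ≥
      (n + k).choose k * (a - 1) ^ k ∧
    Nat.card (PostEditSet (List.replicate n α) 0 k) ≥
      (n + k).choose k * (a - 1) ^ k := by
  classical
  let F : Set (List 𝒜) := {Y | Y.length = n + k ∧ (List.replicate n α).Sublist Y}
  have hF : F ⊆ PostEditSet (List.replicate n α) 0 k := fun Y hY ↦
    mem_postEditSet_of_sublist 0 hY.2 (by simp [hY.1])
  have : Finite F := ((List.finite_length_eq 𝒜 (n + k)).subset fun _ hY ↦ hY.1).to_subtype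
  have hchoice : (n + k).choose k * (a - 1) ^ k ≤ Nat.card F := by
    rw [← hcard, ← Fintype.card_fin (n + k), ← card_sigma_finsetLen_fun_ne α k,
      ← Nat.card_eq_fintype_card]
    refine Nat.card_le_card_of_injective
      (fun p ↦ ⟨List.ofFn (fillOutside α p.1.1 p.2), by simp,
        replicate_sublist_ofFn_fillOutside α p.1.2 p.2⟩) fun p q h ↦ ?_
    exact (fillOutside_injective α).comp
      (Subtype.val_injective.sigma_map fun _ ↦ Function.injective_id)
      (List.ofFn_injective (congrArg Subtype.val h))
  exact ⟨hchoice, hchoice.trans (Nat.card_mono (PostEditSet.finite _ _ _) hF)⟩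

/-- Over an alphabet of size `a ≥ 2`, the number of strings of length `n + k`
containing the constant string `α^n` as a subsequence is at least
`C(n+k, k)·(a−1)^k`; consequently the post-edit set of `α^n` under at most `k`
insertions (and no deletions) is at least that large. -/
theorem card_superStrings_ge {𝒜 : Type*} [Fintype 𝒜] [DecidableEq 𝒜] {a : ℕ}
    (hcard : Fintype.card 𝒜 = a) (ha : 2 ≤ a) (α : 𝒜) (n k : ℕ) :
    Nat.card {Y : List 𝒜 // Y.length = n + k ∧ (List.replicate n α).Sublist Y} ≥
      (n + k).choose k * (a - 1) ^ k ∧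
    Nat.card (PostEditSet (List.replicate n α) 0 k) ≥
      (n + k).choose k * (a - 1) ^ k :=
  card_superStrings_ge_general hcard α n k
end

section
/- Let X = (x₁, …, x_n) be a string over an alphabet 𝒜 in which every symbol differs from the preceding one (x_j ≠ x_{j+1} for all 1 ≤ j < n). For a set S of positions, let X∖S denote the string obtained by deleting the positions in S. If S and S' are two distinct sets of k positions each containing no two adjacent positions (no j with both j and j+1 in the set), then X∖S ≠ X∖S'. Consequently, the number of distinct subsequences of X of length n − k is at least C(n−k, k). -/
/-!
Read the two outputs from the left. If both deletion patterns treat the first position alike,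
peel it off and recurse. Otherwise one pattern deletes position 0 and, being non-adjacent,
keeps position 1, so its output starts with `x₂` while the other starts with `x₁ ≠ x₂`.

For the count, the subsequences of `x₁ x₂ ⋯ xₙ` of length `n - k` include those keeping `x₁`
and those deleting `x₁` but keeping `x₂`; the two families are disjoint because `x₁ ≠ x₂`,
and their sizes satisfy, by induction, Pascal's rule
`C(n-k, k) = C(n-k-1, k-1) + C(n-k-1, k)`.
-/

/-- `deleteIndices X S` is the string obtained from `X` by deleting the symbols
whose positions lie in `S`. -/
def deleteIndices {α : Type*} (X : List α) (S : Finset ℕ) : List α :=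
  (X.zipIdx.filter (fun p => p.2 ∉ S)).map Prod.fst

section

variable {α : Type*}

def deleteIndicesFrom (X : List α) (S : Finset ℕ) (o : ℕ) : List α :=
  ((X.zipIdx o).filter (fun p => p.2 ∉ S)).map Prod.fst

theorem deleteIndices_eq_deleteIndicesFrom_zero (X : List α) (S : Finset ℕ) :
    deleteIndices X S = deleteIndicesFrom X S 0 :=
  rfl

theorem deleteIndicesFrom_nil (S : Finset ℕ) (o : ℕ) : deleteIndicesFrom [] S o = ([] : List α) :=
  rfl

theorem deleteIndicesFrom_cons (a : α) (X : List α) (S : Finset ℕ) (o : ℕ) :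
    deleteIndicesFrom (a :: X) S o =
      if o ∈ S then deleteIndicesFrom X S (o + 1) else a :: deleteIndicesFrom X S (o + 1) := by
  by_cases h : o ∈ S <;> simp [deleteIndicesFrom, h]

theorem deleteIndicesFrom_ne_cons {a : α} {X : List α} (hX : (a :: X).IsChain (· ≠ ·))
    {S : Finset ℕ} {o : ℕ} (ho : o ∉ S) (Y : List α) : deleteIndicesFrom X S o ≠ a :: Y := by
  cases X with
  | nil => simp [deleteIndicesFrom_nil]
  | cons b X =>
    rw [deleteIndicesFrom_cons, if_neg ho]
    exact fun h => (List.isChain_cons_cons.mp hX).1 (List.cons.inj h).1.symm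

/-- Only positions in `[o, o + X.length)` matter, so this is the most one can recover. -/
theorem mem_iff_mem_of_deleteIndicesFrom_eq {X : List α} (hX : X.IsChain (· ≠ ·))
    {S S' : Finset ℕ} (hS : ∀ j, ¬(j ∈ S ∧ j + 1 ∈ S)) (hS' : ∀ j, ¬(j ∈ S' ∧ j + 1 ∈ S'))
    {o : ℕ} (h : deleteIndicesFrom X S o = deleteIndicesFrom X S' o)
    {i : ℕ} (hoi : o ≤ i) (hi : i < o + X.length) : i ∈ S ↔ i ∈ S' := by
  induction X generalizing o with
  | nil => simp at hi; omega
  | cons a X ih =>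
    rw [deleteIndicesFrom_cons, deleteIndicesFrom_cons] at h
    have tail_iff (htail : deleteIndicesFrom X S (o + 1) = deleteIndicesFrom X S' (o + 1))
        (hio : i ≠ o) : i ∈ S ↔ i ∈ S' :=
      ih hX.tail htail (by omega) (by simp at hi; omega)
    by_cases hoS : o ∈ S <;> by_cases hoS' : o ∈ S' <;> simp only [hoS, hoS', if_true,
      if_false, List.cons.injEq, true_and] at h
    · rcases eq_or_ne i o with rfl | hio
      exacts [iff_of_true hoS hoS', tail_iff h hio]
    · exact absurd h (deleteIndicesFrom_ne_cons hX (fun h1 => hS o ⟨hoS, h1⟩) _)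
    · exact absurd h.symm (deleteIndicesFrom_ne_cons hX (fun h1 => hS' o ⟨hoS', h1⟩) _)
    · rcases eq_or_ne i o with rfl | hio
      exacts [iff_of_false hoS hoS', tail_iff h hio]

theorem eq_of_deleteIndices_eq {X : List α} (hX : X.IsChain (· ≠ ·)) {S S' : Finset ℕ}
    (hSX : S ⊆ Finset.range X.length) (hS'X : S' ⊆ Finset.range X.length)
    (hS : ∀ j, ¬(j ∈ S ∧ j + 1 ∈ S)) (hS' : ∀ j, ¬(j ∈ S' ∧ j + 1 ∈ S'))
    (h : deleteIndices X S = deleteIndices X S') : S = S' := by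
  rw [deleteIndices_eq_deleteIndicesFrom_zero, deleteIndices_eq_deleteIndicesFrom_zero] at h
  ext i
  by_cases hi : i < X.length
  · exact mem_iff_mem_of_deleteIndicesFrom_eq hX hS hS' h (Nat.zero_le i) (by omega)
  · exact iff_of_false (fun h => hi (Finset.mem_range.mp (hSX h)))
      (fun h => hi (Finset.mem_range.mp (hS'X h)))

theorem card_sublistsLen_add_card_sublistsLen_le [DecidableEq α] {a b : α} (hab : a ≠ b)
    (X : List α) (m : ℕ) :
    (X.sublistsLen m).toFinset.card + ((b :: X).sublistsLen m).toFinset.card ≤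
      ((a :: b :: X).sublistsLen (m + 1)).toFinset.card := by
  have hdisj : Disjoint ((X.sublistsLen m).toFinset.image (List.cons b))
      (((b :: X).sublistsLen m).toFinset.image (List.cons a)) := by
    simp only [Finset.disjoint_left, Finset.mem_image]
    rintro _ ⟨Y, -, rfl⟩ ⟨Z, -, h⟩
    exact hab (List.cons.inj h).1
  rw [← Finset.card_image_of_injective (X.sublistsLen m).toFinset List.cons_injective,
    ← Finset.card_image_of_injective ((b :: X).sublistsLen m).toFinset List.cons_injective,
    ← Finset.card_union_of_disjoint hdisj]
  refine Finset.card_le_card fun Z hZ => ?_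
  simp only [Finset.mem_union, Finset.mem_image, List.mem_toFinset, List.mem_sublistsLen] at hZ ⊢
  rcases hZ with ⟨Y, ⟨hY, rfl⟩, rfl⟩ | ⟨Y, ⟨hY, rfl⟩, rfl⟩
  · exact ⟨(hY.cons_cons b).cons a, rfl⟩
  · exact ⟨hY.cons_cons a, rfl⟩

theorem choose_le_card_sublistsLen [DecidableEq α] {X : List α} (hX : X.IsChain (· ≠ ·))
    (k : ℕ) : (X.length - k).choose k ≤ (X.sublistsLen (X.length - k)).toFinset.card := by
  induction X using List.twoStepInduction generalizing k with
  | nil => cases k <;> simp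
  | singleton a => cases k <;> simp
  | cons_cons a b X ih ih' =>
    cases k with
    | zero => simp
    | succ k =>
      rcases lt_or_ge X.length k with hXk | hkX
      · rw [show (a :: b :: X).length - (k + 1) = 0 by simp; omega]
        simp
      obtain ⟨m, hm⟩ := Nat.exists_eq_add_of_le' hkX
      have hdrop : (b :: X).length - (k + 1) = m := by simp; omega
      have hkeep : X.length - k = m := by omega
      have hkeep_cons : (a :: b :: X).length - (k + 1) = m + 1 := by simp; omega
      have hdrop_bound := ih' b hX.tail (k + 1)
      have hkeep_bound := ih hX.tail.tail k
      rw [hdrop] at hdrop_bound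
      rw [hkeep] at hkeep_bound
      rw [hkeep_cons, Nat.choose_succ_succ']
      exact (add_le_add hkeep_bound hdrop_bound).trans
        (card_sublistsLen_add_card_sublistsLen_le (List.isChain_cons_cons.mp hX).1 X m)

end

/-- For a string `X` in which every symbol differs from the preceding one,
distinct sets of `k` pairwise non-adjacent deletion positions yield distinct
strings; consequently `X` has at least `C(n−k, k)` distinct subsequences of
length `n − k`, where `n = |X|`. -/
theorem distinct_nonadjacent_deletions {α : Type*} {X : List α}
    (hX : X.Chain' (· ≠ ·)) (k : ℕ) :
    (∀ S S' : Finset ℕ, S ⊆ Finset.range X.length → S' ⊆ Finset.range X.length →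
      S.card = k → S'.card = k →
      (∀ j, ¬(j ∈ S ∧ j + 1 ∈ S)) → (∀ j, ¬(j ∈ S' ∧ j + 1 ∈ S')) →
      S ≠ S' → deleteIndices X S ≠ deleteIndices X S') ∧
    Nat.card {Z : List α // Z.Sublist X ∧ Z.length = X.length - k} ≥
      (X.length - k).choose k := by
  classical
  refine ⟨fun S S' hSX hS'X _ _ hS hS' hne h => ?_, ?_⟩
  · exact hne (eq_of_deleteIndices_eq hX hSX hS'X hS hS' h)
  have hcard : Nat.card {Z : List α // Z.Sublist X ∧ Z.length = X.length - k} =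
      (X.sublistsLen (X.length - k)).toFinset.card := by
    rw [← Nat.card_eq_finsetCard]
    exact Nat.card_congr (Equiv.subtypeEquivRight fun Z => by simp [List.mem_sublistsLen])
  exact hcard ▸ choose_le_card_sublistsLen hX k
end

section
/- For every integer a ≥ 3 there exist a constant C > 0 and ε₀ ∈ (0, 1/2) such that for all ε, δ ∈ (0, ε₀): (1−δ)·H(δ/(1−δ)) + (1−δ+ε)·H(ε/(1−δ+ε)) + ε·log₂(a−2) ≥ H(δ) + H(ε) + ε·log₂ a − (2·log₂ e)·ε/a − (2·log₂ e)·max(ε,δ)² − C·( max(ε,δ)³ + ε/a² ). -/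
set_option maxHeartbeats 2000000

lemma taylor2 {x : ℝ} (hx : |x| ≤ 3/4) :
    |Real.log (1 - x) + x + x^2/2| ≤ 4 * |x|^3 := by
  have h1 : |x| < 1 := lt_of_le_of_lt hx (by norm_num)
  have h := Real.abs_log_sub_add_sum_range_le h1 2
  simp [Finset.sum_range_succ] at h
  have h2 : |x|^3 / (1 - |x|) ≤ 4 * |x|^3 := by
    rw [div_le_iff₀ (by linarith)]
    nlinarith [pow_nonneg (abs_nonneg x) 3]
  calc |Real.log (1 - x) + x + x^2/2| = |x + x^2/2 + Real.log (1-x)| := by ring_nf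
    _ ≤ |x|^3 / (1-|x|) := by convert h using 2; ring
    _ ≤ 4*|x|^3 := h2

lemma phi_bound {t : ℝ} (ht : |t| ≤ 1/2) :
    |(1 + t) * Real.log (1 + t) - t - t^2/2| ≤ 7 * |t|^3 := by
  have h := taylor2 (x := -t) (by rw [abs_neg]; linarith)
  rw [show (1 : ℝ) - -t = 1 + t by ring, abs_neg] at h
  have habs := abs_le.mp h
  have ht3 : 0 ≤ |t|^3 := pow_nonneg (abs_nonneg t) 3
  have ht1 : -(1/2) ≤ t ∧ t ≤ 1/2 := abs_le.mp ht
  set e := Real.log (1 + t) - (t - t^2/2) with he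
  have he1 : -(4*|t|^3) ≤ e := by rw [he]; nlinarith [habs.1]
  have he2 : e ≤ 4*|t|^3 := by rw [he]; nlinarith [habs.2]
  have hlog : Real.log (1 + t) = t - t^2/2 + e := by rw [he]; ring
  rw [hlog, abs_le]
  have h3 : t^3 ≤ |t|^3 := by
    calc t^3 ≤ |t^3| := le_abs_self _
      _ = |t|^3 := by rw [abs_pow]
  have h3' : -(|t|^3) ≤ t^3 := by
    rw [neg_le]
    calc -t^3 = (-t)^3 := by ring
      _ ≤ |(-t)^3| := le_abs_self _
      _ = |t|^3 := by rw [abs_pow, abs_neg]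
  constructor <;> nlinarith [ht1.1, ht1.2, he1, he2, h3, h3', sq_abs t, abs_nonneg t]

/-- The binary entropy function, with base-2 logarithms. -/
noncomputable def binEnt (p : ℝ) : ℝ :=
  -(p * Real.logb 2 p) - (1 - p) * Real.logb 2 (1 - p)

/-- Final asymptotic inequality of Theorem 2: the APES-AID lower-bound rate is at
least `H(δ)+H(ε)+ε·log₂ a` minus lower-order correction terms. -/
theorem rate_lower_bound_asymptotic {a : ℕ} (ha : 3 ≤ a) :
    ∃ C : ℝ, 0 < C ∧ ∃ ε₀ : ℝ, ε₀ ∈ Set.Ioo (0 : ℝ) (1 / 2) ∧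
      ∀ ε δ : ℝ, ε ∈ Set.Ioo 0 ε₀ → δ ∈ Set.Ioo 0 ε₀ →
        (1 - δ) * binEnt (δ / (1 - δ)) + (1 - δ + ε) * binEnt (ε / (1 - δ + ε)) +
            ε * Real.logb 2 ((a : ℝ) - 2) ≥
          binEnt δ + binEnt ε + ε * Real.logb 2 a
            - (2 * Real.logb 2 (Real.exp 1)) * ε / a
            - (2 * Real.logb 2 (Real.exp 1)) * max ε δ ^ 2
            - C * (max ε δ ^ 3 + ε / (a : ℝ) ^ 2) := by
  refine ⟨120, by norm_num, 1/5, ⟨by norm_num, by norm_num⟩, ?_⟩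
  rintro ε δ ⟨hε0, hε1⟩ ⟨hδ0, hδ1⟩
  have haR : (3:ℝ) ≤ (a:ℝ) := by exact_mod_cast ha
  have haPos : (0:ℝ) < a := by linarith
  have ha2 : (1:ℝ) ≤ (a:ℝ) - 2 := by linarith
  have h1δ : 0 < 1 - δ := by linarith
  have h12δ : 0 < 1 - 2*δ := by linarith
  have hs : 0 < 1 - δ + ε := by linarith
  have hl2 : (0.6931471803:ℝ) < Real.log 2 := Real.log_two_gt_d9
  have hl2pos : (0:ℝ) < Real.log 2 := by linarith
  have hεm : ε ≤ max ε δ := le_max_left _ _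
  have hδm : δ ≤ max ε δ := le_max_right _ _
  have hm0 : 0 < max ε δ := lt_of_lt_of_le hε0 hεm
  have hm1 : max ε δ < 1/5 := max_lt hε1 hδ1
  -- inverse-of-a facts
  have hainv0 : (0:ℝ) < (a:ℝ)⁻¹ := inv_pos.mpr haPos
  have hainv : (a:ℝ)⁻¹ ≤ 1/3 := by
    rw [inv_le_comm₀ haPos (by norm_num)]; linarith
  have h2a : (0:ℝ) < 2*(a:ℝ)⁻¹ := by positivity
  have h2a23 : 2*(a:ℝ)⁻¹ ≤ 2/3 := by linarith
  have h12a : (0:ℝ) < 1 - 2*(a:ℝ)⁻¹ := by linarith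
  -- φ bounds at the four points
  have b1 : |(-δ)| ≤ 1/2 := by rw [abs_neg, abs_of_pos hδ0]; linarith
  have P1 := abs_le.mp (phi_bound b1)
  rw [show (1:ℝ) + -δ = 1 - δ from by ring, abs_neg, abs_of_pos hδ0] at P1
  have P1l : -δ + δ^2/2 - 7*δ^3 ≤ (1-δ)*Real.log (1-δ) := by linarith [P1.1]
  have b2 : |(-(2*δ))| ≤ 1/2 := by
    rw [abs_neg, abs_of_pos (by linarith : (0:ℝ) < 2*δ)]; linarith
  have P2 := abs_le.mp (phi_bound b2)
  rw [show (1:ℝ) + -(2*δ) = 1 - 2*δ from by ring, abs_neg,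
    abs_of_pos (by linarith : (0:ℝ) < 2*δ)] at P2
  have P2u : (1-2*δ)*Real.log (1-2*δ) ≤ -(2*δ) + 2*δ^2 + 56*δ^3 := by linarith [P2.2]
  have b3 : |(-ε)| ≤ 1/2 := by rw [abs_neg, abs_of_pos hε0]; linarith
  have P3 := abs_le.mp (phi_bound b3)
  rw [show (1:ℝ) + -ε = 1 - ε from by ring, abs_neg, abs_of_pos hε0] at P3
  have P3l : -ε + ε^2/2 - 7*ε^3 ≤ (1-ε)*Real.log (1-ε) := by linarith [P3.1]
  have b4 : |ε - δ| ≤ 1/2 := abs_le.mpr ⟨by linarith, by linarith⟩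
  have P4 := abs_le.mp (phi_bound b4)
  rw [show (1:ℝ) + (ε - δ) = 1 - δ + ε from by ring] at P4
  have hA3 : |ε-δ|^3 ≤ (max ε δ)^3 :=
    pow_le_pow_left₀ (abs_nonneg _) (abs_le.mpr ⟨by linarith, by linarith⟩) 3
  have P4l : (ε-δ) + (ε-δ)^2/2 - 7*(max ε δ)^3 ≤ (1-δ+ε)*Real.log (1-δ+ε) := by
    linarith [P4.1, hA3]
  -- the a-term
  have h3a : (a:ℝ)⁻¹^3 ≤ (1/3)*(a:ℝ)⁻¹^2 := by nlinarith [hainv, sq_nonneg ((a:ℝ)⁻¹)]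
  have tA' := taylor2 (x := 2*(a:ℝ)⁻¹) (by rw [abs_of_pos h2a]; linarith)
  rw [abs_of_pos h2a] at tA'
  have tA := abs_le.mp tA'
  have hAlog : -(2*(a:ℝ)⁻¹) - 2*(a:ℝ)⁻¹^2 - (32/3)*(a:ℝ)⁻¹^2 ≤ Real.log (1 - 2*(a:ℝ)⁻¹) := by
    linarith [tA.1, h3a]
  have hAε : ε * (-(2*(a:ℝ)⁻¹) - 2*(a:ℝ)⁻¹^2 - (32/3)*(a:ℝ)⁻¹^2) ≤ ε * Real.log (1 - 2*(a:ℝ)⁻¹) :=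
    mul_le_mul_of_nonneg_left hAlog hε0.le
  -- rewrite log(a-2)
  have hLa : Real.log ((a:ℝ) - 2) = Real.log (1 - 2*(a:ℝ)⁻¹) + Real.log (a:ℝ) := by
    have hm : (1 - 2*(a:ℝ)⁻¹) * a = (a:ℝ) - 2 := by field_simp
    rw [← hm, Real.log_mul h12a.ne' haPos.ne']
  -- the key identity
  have hq1 : 1 - δ/(1-δ) = (1-2*δ)/(1-δ) := by field_simp; try ring
  have hq2 : 1 - ε/(1-δ+ε) = (1-δ)/(1-δ+ε) := by field_simp; try ring
  have expand : Real.log 2 * (((1 - δ) * binEnt (δ / (1 - δ)) + (1 - δ + ε) * binEnt (ε / (1 - δ + ε)) +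
            ε * Real.logb 2 ((a : ℝ) - 2)) -
          (binEnt δ + binEnt ε + ε * Real.logb 2 a
            - (2 * Real.logb 2 (Real.exp 1)) * ε / a
            - (2 * Real.logb 2 (Real.exp 1)) * max ε δ ^ 2
            - 120 * (max ε δ ^ 3 + ε / (a : ℝ) ^ 2)))
      = (1-δ)*Real.log (1-δ) - (1-2*δ)*Real.log (1-2*δ) + (1-ε)*Real.log (1-ε)
        + (1-δ+ε)*Real.log (1-δ+ε) + ε * Real.log (1 - 2*(a:ℝ)⁻¹)
        + 2*ε*(a:ℝ)⁻¹ + 2*(max ε δ)^2 + 120*Real.log 2*((max ε δ)^3 + ε*(a:ℝ)⁻¹^2) := by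
    unfold binEnt
    rw [hq1, hq2]
    simp only [Real.logb]
    rw [Real.log_div hδ0.ne' h1δ.ne', Real.log_div h12δ.ne' h1δ.ne',
      Real.log_div hε0.ne' hs.ne', Real.log_div h1δ.ne' hs.ne', Real.log_exp, hLa]
    field_simp
    ring
  have key : 0 ≤ Real.log 2 * (((1 - δ) * binEnt (δ / (1 - δ)) + (1 - δ + ε) * binEnt (ε / (1 - δ + ε)) +
            ε * Real.logb 2 ((a : ℝ) - 2)) -
          (binEnt δ + binEnt ε + ε * Real.logb 2 a
            - (2 * Real.logb 2 (Real.exp 1)) * ε / a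
            - (2 * Real.logb 2 (Real.exp 1)) * max ε δ ^ 2
            - 120 * (max ε δ ^ 3 + ε / (a : ℝ) ^ 2))) := by
    rw [expand]
    clear expand hLa hq1 hq2 tA tA' b1 b2 b3 b4 P1 P2 P3 P4
    have hd2 : δ^2 ≤ (max ε δ)^2 := pow_le_pow_left₀ hδ0.le hδm 2
    have hed : ε*δ ≤ (max ε δ)^2 := by nlinarith [hεm, hδm, hδ0.le, hε0.le]
    have hd3 : δ^3 ≤ (max ε δ)^3 := pow_le_pow_left₀ hδ0.le hδm 3
    have he3 : ε^3 ≤ (max ε δ)^3 := pow_le_pow_left₀ hε0.le hεm 3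
    have hl2m : 83*((max ε δ)^3) ≤ 120*Real.log 2*((max ε δ)^3) :=
      mul_le_mul_of_nonneg_right (by linarith) (pow_nonneg hm0.le 3)
    have hl2e : 83*(ε*(a:ℝ)⁻¹^2) ≤ 120*Real.log 2*(ε*(a:ℝ)⁻¹^2) :=
      mul_le_mul_of_nonneg_right (by linarith) (mul_nonneg hε0.le (sq_nonneg ((a:ℝ)⁻¹)))
    have S1 : -δ^2 + ε^2 - ε*δ - 77*(max ε δ)^3 ≤
        (1-δ)*Real.log (1-δ) - (1-2*δ)*Real.log (1-2*δ) + (1-ε)*Real.log (1-ε)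
          + (1-δ+ε)*Real.log (1-δ+ε) := by
      linarith [P1l, P2u, P3l, P4l, hd3, he3]
    have S2 : -2*(ε*(a:ℝ)⁻¹) - 13*(ε*(a:ℝ)⁻¹^2) ≤ ε * Real.log (1 - 2*(a:ℝ)⁻¹) := by
      linarith [hAε, mul_nonneg hε0.le (sq_nonneg ((a:ℝ)⁻¹))]
    linarith [S1, S2, hd2, hed, hl2m, hl2e, sq_nonneg ε, pow_nonneg hm0.le 3, mul_nonneg hε0.le (sq_nonneg ((a:ℝ)⁻¹))]
  have hX := (mul_nonneg_iff_of_pos_left hl2pos).mp key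
  linarith [hX]
end

section
/- There exist a constant C > 0 and ε₀ ∈ (0, 1/2) such that for all ε, δ ∈ (0, ε₀) with ε + δ < 1: | (−δ·log₂ δ − ε·log₂ ε − (1−ε−δ)·log₂(1−ε−δ)) − H(δ) − H(ε) + (log₂ e)·ε·δ | ≤ C·max(ε,δ)³. That is, the ternary entropy of the distribution (ε, δ, 1−ε−δ) equals H(δ) + H(ε) − (log₂ e)·εδ up to an error of order max(ε,δ)³. -/
/-!
Work in nats. With `R x = (1 - x) log (1 - x) + x - x² / 2`, the cubic Taylor remainder of
`(1 - x) log (1 - x)` at `0`, the quadratic parts cancel exactly: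
`H(ε, δ, 1 - ε - δ) - H(δ) - H(ε) + εδ = R δ + R ε - R (ε + δ)`.
The logarithm series bounds `|R x| ≤ (3/2) x³` on `[0, 1)`, and `ε + δ ≤ 2 max(ε, δ)`.
-/

open Real

noncomputable def oneSubMulLogRemainder (x : ℝ) : ℝ :=
  (1 - x) * log (1 - x) + x - x ^ 2 / 2

lemma abs_oneSubMulLogRemainder_le {x : ℝ} (hx₀ : 0 ≤ x) (hx₁ : x < 1) :
    |oneSubMulLogRemainder x| ≤ 3 / 2 * x ^ 3 := by
  have hpos : 0 < 1 - x := by linarith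
  have hlog : |log (1 - x) + x + x ^ 2 / 2| ≤ x ^ 3 / (1 - x) := by
    have h := abs_log_sub_add_sum_range_le (by rwa [abs_of_nonneg hx₀]) 2
    simp only [abs_of_nonneg hx₀, Finset.sum_range_succ, Finset.sum_range_zero] at h
    norm_num at h
    rwa [add_comm, ← add_assoc] at h
  have hlog' : (1 - x) * |log (1 - x) + x + x ^ 2 / 2| ≤ x ^ 3 := by
    rwa [le_div_iff₀ hpos, mul_comm] at hlog
  have hR : oneSubMulLogRemainder x = x ^ 3 / 2 + (1 - x) * (log (1 - x) + x + x ^ 2 / 2) := by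
    rw [oneSubMulLogRemainder]
    ring
  calc |oneSubMulLogRemainder x|
      ≤ |x ^ 3 / 2| + |(1 - x) * (log (1 - x) + x + x ^ 2 / 2)| := hR ▸ abs_add_le _ _
    _ = x ^ 3 / 2 + (1 - x) * |log (1 - x) + x + x ^ 2 / 2| := by
      rw [abs_mul, abs_of_pos hpos, abs_of_nonneg (by positivity)]
    _ ≤ 3 / 2 * x ^ 3 := by linarith

lemma ternaryEntropy_sub_binEnt_eq (ε δ : ℝ) :
    (-(δ * logb 2 δ) - ε * logb 2 ε - (1 - ε - δ) * logb 2 (1 - ε - δ))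
        - binEnt δ - binEnt ε + logb 2 (exp 1) * ε * δ
      = (oneSubMulLogRemainder δ + oneSubMulLogRemainder ε
          - oneSubMulLogRemainder (ε + δ)) / log 2 := by
  have hlog2 : log 2 ≠ 0 := (log_pos one_lt_two).ne'
  simp only [binEnt, logb, log_exp, oneSubMulLogRemainder, ← sub_sub]
  field_simp
  ring

lemma pow_three_add_pow_three_add_pow_three_le {ε δ : ℝ} (hε : 0 ≤ ε) (hδ : 0 ≤ δ) :
    δ ^ 3 + ε ^ 3 + (ε + δ) ^ 3 ≤ 10 * max ε δ ^ 3 := by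
  have hεM : ε ^ 3 ≤ max ε δ ^ 3 := pow_le_pow_left₀ hε (le_max_left ε δ) 3
  have hδM : δ ^ 3 ≤ max ε δ ^ 3 := pow_le_pow_left₀ hδ (le_max_right ε δ) 3
  have hsum : (ε + δ) ^ 3 ≤ (2 * max ε δ) ^ 3 :=
    pow_le_pow_left₀ (by positivity) (by linarith [le_max_left ε δ, le_max_right ε δ]) 3
  linarith

/-- Taylor-expansion identity of Lemma 3: the ternary entropy of `(ε, δ, 1−ε−δ)`
equals `H(δ) + H(ε) − (log₂ e)·εδ` up to an error of order `max(ε,δ)³`. -/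
theorem ternary_entropy_expansion :
    ∃ C : ℝ, 0 < C ∧ ∃ ε₀ : ℝ, ε₀ ∈ Set.Ioo (0 : ℝ) (1 / 2) ∧
      ∀ ε δ : ℝ, ε ∈ Set.Ioo 0 ε₀ → δ ∈ Set.Ioo 0 ε₀ → ε + δ < 1 →
        |(-(δ * Real.logb 2 δ) - ε * Real.logb 2 ε -
            (1 - ε - δ) * Real.logb 2 (1 - ε - δ))
          - binEnt δ - binEnt ε + Real.logb 2 (Real.exp 1) * ε * δ| ≤
          C * max ε δ ^ 3 := by
  have hlog2 : 0 < log 2 := log_pos one_lt_two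
  refine ⟨15 / log 2, by positivity, 1 / 4, ⟨by norm_num, by norm_num⟩, ?_⟩
  rintro ε δ ⟨hε₀, hε₁⟩ ⟨hδ₀, hδ₁⟩ hεδ
  have hRδ := abs_oneSubMulLogRemainder_le hδ₀.le (by linarith)
  have hRε := abs_oneSubMulLogRemainder_le hε₀.le (by linarith)
  have hRεδ := abs_oneSubMulLogRemainder_le (by linarith) hεδ
  have hM := pow_three_add_pow_three_add_pow_three_le hε₀.le hδ₀.le
  rw [ternaryEntropy_sub_binEnt_eq, abs_div, abs_of_pos hlog2, div_mul_eq_mul_div,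
    div_le_div_iff_of_pos_right hlog2]
  calc |oneSubMulLogRemainder δ + oneSubMulLogRemainder ε - oneSubMulLogRemainder (ε + δ)|
      ≤ |oneSubMulLogRemainder δ| + |oneSubMulLogRemainder ε|
          + |oneSubMulLogRemainder (ε + δ)| :=
        (abs_sub _ _).trans (add_le_add_left (abs_add_le _ _) _)
    _ ≤ 15 * max ε δ ^ 3 := by linarith
end

section
/- Let 𝒜 be a finite alphabet with |𝒜| = a, let X ∈ 𝒜^n be a string of length n, and let d, i ∈ ℕ. Then the post-edit set of X with deletion budget d and insertion budget i, namely {Y : ∃ Z, Z is a subsequence of X and of Y, |X| − |Z| ≤ d, |Y| − |Z| ≤ i}, has cardinality at most Σ_{d'=0}^{d} Σ_{i'=0}^{i} C(n, d') · C(n − d' + i', i') · a^{i'}. -/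
theorem Set.encard_biUnion_le_encard_mul {α ι : Type*} {T : Set ι} {f : ι → Set α} {B : ℕ∞}
    (hB : ∀ j ∈ T, (f j).encard ≤ B) : (⋃ j ∈ T, f j).encard ≤ T.encard * B := by
  obtain hT | hT := T.finite_or_infinite
  · lift T to Finset ι using hT
    calc (⋃ j ∈ T, f j).encard ≤ ∑ j ∈ T, (f j).encard := T.set_encard_biUnion_le f
      _ ≤ ∑ _ ∈ T, B := Finset.sum_le_sum hB
      _ = _ := by simp
  · rcases eq_or_ne B 0 with rfl | hB0
    · simp_all
    · rw [hT.encard_eq, ENat.top_mul hB0]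
      exact le_top

theorem List.encard_setOf_length_eq {α : Type*} [Fintype α] (k : ℕ) :
    {Y : List α | Y.length = k}.encard = (Fintype.card α ^ k : ℕ) := by
  change ENat.card (List.Vector α k) = _
  rw [ENat.card_eq_coe_fintype_card, card_vector]

namespace PostEditSet

variable {α : Type*}

def deletions (X : List α) (d : ℕ) : Set (List α) :=
  {Z | Z.Sublist X ∧ Z.length + d = X.length}

def insertions (Z : List α) (k : ℕ) : Set (List α) :=
  {Y | Z.Sublist Y ∧ Y.length = Z.length + k}

lemma encard_deletions_le (X : List α) (d : ℕ) : (deletions X d).encard ≤ X.length.choose d := by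
  classical
  by_cases hd : d ≤ X.length
  · have hsub : deletions X d ⊆ ↑(X.sublistsLen (X.length - d)).toFinset := by
      rintro Z ⟨hZX, hZ⟩
      simp only [List.coe_toFinset, List.mem_sublistsLen, Set.mem_ofPred_eq, hZX, true_and]
      omega
    calc (deletions X d).encard ≤ (X.sublistsLen (X.length - d)).toFinset.card :=
          (Set.encard_le_encard hsub).trans_eq (Set.encard_coe_eq_coe_finsetCard _)
      _ ≤ (X.sublistsLen (X.length - d)).length := by exact_mod_cast List.toFinset_card_le _
      _ = X.length.choose d := by rw [List.length_sublistsLen, Nat.choose_symm hd]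
  · have hempty : deletions X d = ∅ := by
      ext Z
      simp only [deletions, Set.mem_ofPred_eq, Set.mem_empty_iff_false, iff_false, not_and]
      omega
    simp [hempty]

lemma insertions_nil (k : ℕ) : insertions ([] : List α) k = {Y | Y.length = k} := by
  simp [insertions]

lemma insertions_zero (Z : List α) : insertions Z 0 = {Z} := by
  ext Y
  simp only [insertions, add_zero, Set.mem_ofPred_eq, Set.mem_singleton_iff]
  exact ⟨fun ⟨h, hl⟩ => (h.eq_of_length hl.symm).symm, by rintro rfl; simp⟩

lemma insertions_cons_succ_subset (z : α) (Z : List α) (k : ℕ) :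
    insertions (z :: Z) (k + 1) ⊆
      (z :: ·) '' insertions Z (k + 1) ∪ ⋃ y, (y :: ·) '' insertions (z :: Z) k := by
  rintro (_ | ⟨y, Y⟩) ⟨hsub, hlen⟩
  · simp at hlen
  · simp only [List.length_cons] at hlen
    rcases List.sublist_cons_iff.1 hsub with h | ⟨r, ⟨rfl, rfl⟩, h⟩
    · exact .inr (Set.mem_iUnion.2 ⟨y, Y, ⟨h, by simp only [List.length_cons]; omega⟩, rfl⟩)
    · exact .inl ⟨Y, ⟨h, by omega⟩, rfl⟩

lemma encard_insertions_le [Fintype α] (Z : List α) (k : ℕ) :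
    (insertions Z k).encard ≤ ((Z.length + k).choose k * Fintype.card α ^ k : ℕ) := by
  induction Z generalizing k with
  | nil => simp [insertions_nil, List.encard_setOf_length_eq]
  | cons z Z ihZ =>
    induction k with
    | zero => simp [insertions_zero]
    | succ k ihk =>
      calc (insertions (z :: Z) (k + 1)).encard
          ≤ ((z :: ·) '' insertions Z (k + 1)).encard +
              (⋃ y, (y :: ·) '' insertions (z :: Z) k).encard :=
            (Set.encard_le_encard (insertions_cons_succ_subset z Z k)).trans
              (Set.encard_union_le _ _)
        _ ≤ (insertions Z (k + 1)).encard + ∑ _ : α, (insertions (z :: Z) k).encard := by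
            refine add_le_add (Set.encard_image_le _ _) ?_
            exact (Set.encard_iUnion_le_of_fintype _).trans
              (Finset.sum_le_sum fun y _ => Set.encard_image_le _ _)
        _ ≤ ((Z.length + (k + 1)).choose (k + 1) * Fintype.card α ^ (k + 1) : ℕ) +
              ∑ _ : α, (((Z.length + 1 + k).choose k * Fintype.card α ^ k : ℕ) : ℕ∞) :=
            add_le_add (ihZ (k + 1)) (Finset.sum_le_sum fun _ _ => ihk)
        _ = (((z :: Z).length + (k + 1)).choose (k + 1) * Fintype.card α ^ (k + 1) : ℕ) := by
            norm_cast
            rw [List.length_cons, Finset.sum_const, Finset.card_univ, smul_eq_mul,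
              show Z.length + 1 + (k + 1) = Z.length + 1 + k + 1 by omega, Nat.choose_succ_succ,
              show Z.length + 1 + k = Z.length + (k + 1) by omega]
            ring

lemma encard_biUnion_deletions_insertions_le [Fintype α] (X : List α) (d i : ℕ) :
    (⋃ Z ∈ deletions X d, ⋃ k ∈ Finset.range (i + 1), insertions Z k).encard ≤
      (X.length.choose d : ℕ∞) * ∑ k ∈ Finset.range (i + 1),
        (((X.length - d + k).choose k * Fintype.card α ^ k : ℕ) : ℕ∞) := by
  refine (Set.encard_biUnion_le_encard_mul fun Z hZ => ?_).trans
    (mul_le_mul_left (encard_deletions_le X d) _)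
  refine (Finset.set_encard_biUnion_le _ _).trans (Finset.sum_le_sum fun k _ => ?_)
  rw [show X.length - d = Z.length by have := hZ.2; omega]
  exact encard_insertions_le Z k

lemma subset_biUnion_deletions_insertions (X : List α) (d i : ℕ) :
    PostEditSet X d i ⊆ ⋃ d' ∈ Finset.range (d + 1), ⋃ Z ∈ deletions X d',
      ⋃ i' ∈ Finset.range (i + 1), insertions Z i' := by
  rintro Y ⟨Z, hZX, hZY, hd, hi⟩
  have := hZX.length_le
  have := hZY.length_le
  simp only [Set.mem_iUnion, Finset.mem_range]
  exact ⟨X.length - Z.length, by omega, Z, ⟨hZX, by omega⟩,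
    Y.length - Z.length, by omega, hZY, by omega⟩

end PostEditSet

open PostEditSet in
/-- Counting bound underlying Theorem 4: the post-edit set of a length-`n` string
over an alphabet of size `a`, with deletion budget `d` and insertion budget `i`,
has cardinality at most `Σ_{d'≤d} Σ_{i'≤i} C(n,d')·C(n−d'+i',i')·a^{i'}`. -/
theorem card_postEditSet_le {𝒜 : Type*} [Fintype 𝒜] {a n : ℕ}
    (hcard : Fintype.card 𝒜 = a) (X : List 𝒜) (hX : X.length = n) (d i : ℕ) :
    Nat.card (PostEditSet X d i) ≤
      ∑ d' ∈ Finset.range (d + 1), ∑ i' ∈ Finset.range (i + 1),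
        n.choose d' * (n - d' + i').choose i' * a ^ i' := by
  subst hcard hX
  have hbound : (PostEditSet X d i).encard ≤ ((∑ d' ∈ Finset.range (d + 1),
      ∑ i' ∈ Finset.range (i + 1), X.length.choose d' * (X.length - d' + i').choose i' *
        Fintype.card 𝒜 ^ i' : ℕ) : ℕ∞) :=
    calc (PostEditSet X d i).encard
        ≤ ∑ d' ∈ Finset.range (d + 1),
            (⋃ Z ∈ deletions X d', ⋃ i' ∈ Finset.range (i + 1), insertions Z i').encard :=
          (Set.encard_le_encard (subset_biUnion_deletions_insertions X d i)).trans
            (Finset.set_encard_biUnion_le _ _)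
      _ ≤ ∑ d' ∈ Finset.range (d + 1), (X.length.choose d' : ℕ∞) * ∑ i' ∈ Finset.range (i + 1),
            (((X.length - d' + i').choose i' * Fintype.card 𝒜 ^ i' : ℕ) : ℕ∞) :=
          Finset.sum_le_sum fun d' _ => encard_biUnion_deletions_insertions_le X d' i
      _ = _ := by
          push_cast
          simp_rw [Finset.mul_sum, mul_assoc]
  rw [Nat.card_coe_set_eq]
  exact (Set.encard_le_coe_iff_finite_ncard_le.1 hbound).2
end
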